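/- Let ω = (α, α', 1) ∈ Y, with (p_n/q_n) the convergents of α and (p'_n/q'_n) the convergents of α', and let h(θ) = −Σ_{n≥1} e^{−q_n} cos 2π(q_n θ₁ − p_n θ₃) − Σ_{n≥1} e^{−q'_n} cos 2π(q'_n θ₂ − p'_n θ₃). Then the Hamiltonian flow of H(θ,r) = ⟨r,ω⟩ + h(θ) satisfies, for each n: (a) for all t ∈ [e^{q_n}, q_{n+1}/4], the time-t map Φ^t_H is (1, 1/q_n, q_n)-stretching; (b) for all t ∈ [e^{q'_n}, q'_{n+1}/4], the time-t map Φ^t_H is (2, 1/q'_n, q'_n)-stretching. -/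

import Mathlib

/-!
STATEMENT 3 (Proposition 1 of the paper):
Let ω = (α, α', 1) ∈ Y with convergents (p_n/q_n), (p'_n/q'_n) of α, α', and let
h(θ) = −Σ_{n≥1} e^{−q_n} cos 2π(q_n θ₁ − p_n θ₃) − Σ_{n≥1} e^{−q'_n} cos 2π(q'_n θ₂ − p'_n θ₃).
Then the Hamiltonian flow of H(θ,r) = ⟨r,ω⟩ + h(θ) satisfies, for each n:
(a) for all t ∈ [e^{q_n}, q_{n+1}/4], Φ^t_H is (1, 1/q_n, q_n)-stretching;
(b) for all t ∈ [e^{q'_n}, q'_{n+1}/4], Φ^t_H is (2, 1/q'_n, q'_n)-stretching.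

We work on the universal cover ℝ³ × ℝ³.
-/

open Real Set

noncomputable section

/-- Phase space (the universal cover of 𝕋³ × ℝ³). -/
abbrev PS3 : Type := (Fin 3 → ℝ) × (Fin 3 → ℝ)

/-- `Φ` is the flow of the Hamiltonian ODE θ̇ = ∂H/∂r, ṙ = −∂H/∂θ. -/
def IsHamFlow (H : PS3 → ℝ) (Φ : ℝ → PS3 → PS3) : Prop :=
  (∀ x, Φ 0 x = x) ∧
  (∀ (x : PS3) (t : ℝ) (j : Fin 3),
    HasDerivAt (fun s : ℝ => (Φ s x).1 j)
      (deriv (fun y : ℝ => H ((Φ t x).1, Function.update (Φ t x).2 j y)) ((Φ t x).2 j)) t) ∧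
  (∀ (x : PS3) (t : ℝ) (j : Fin 3),
    HasDerivAt (fun s : ℝ => (Φ s x).2 j)
      (-deriv (fun y : ℝ => H (Function.update (Φ t x).1 j y, (Φ t x).2)) ((Φ t x).1 j)) t)

/-- The interval J⁽¹⁾(s₀, l): the curve in the energy surface {H = H(s₀)} whose
θ₁-coordinate runs over [θ₀₁, θ₀₁ + l], all other coordinates except r₃ being
frozen, and r₃ determined by the energy constraint. -/
def J1 (H : PS3 → ℝ) (s₀ : PS3) (l : ℝ) : Set PS3 :=
  {x | (∃ s ∈ Icc (0 : ℝ) l, x.1 0 = s₀.1 0 + s) ∧ x.1 1 = s₀.1 1 ∧ x.1 2 = s₀.1 2 ∧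
       x.2 0 = s₀.2 0 ∧ x.2 1 = s₀.2 1 ∧ H x = H s₀}

/-- The interval J⁽²⁾(s₀, l): same with the segment in the θ₂ direction. -/
def J2 (H : PS3 → ℝ) (s₀ : PS3) (l : ℝ) : Set PS3 :=
  {x | x.1 0 = s₀.1 0 ∧ (∃ s ∈ Icc (0 : ℝ) l, x.1 1 = s₀.1 1 + s) ∧ x.1 2 = s₀.1 2 ∧
       x.2 0 = s₀.2 0 ∧ x.2 1 = s₀.2 1 ∧ H x = H s₀}

/-- Φ^t is (1, l, L)-stretching: for every interval J⁽¹⁾(s₀, l) with |r₀| ≤ L/10,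
the projection of Φ^t(J⁽¹⁾) on the r₁-coordinate contains [−L, L]; moreover
(θ,r) ↦ π_{r₁}(Φ^t(θ,r)) is independent of θ₂. -/
def Stretching1 (H : PS3 → ℝ) (Φ : ℝ → PS3 → PS3) (t l L : ℝ) : Prop :=
  (∀ s₀ : PS3, ‖s₀.2‖ ≤ L / 10 →
    Icc (-L) L ⊆ (fun x => (Φ t x).2 0) '' J1 H s₀ l) ∧
  (∀ x y : PS3, x.1 0 = y.1 0 → x.1 2 = y.1 2 → x.2 = y.2 →
    (Φ t x).2 0 = (Φ t y).2 0)

/-- Φ^t is (2, l, L)-stretching. -/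
def Stretching2 (H : PS3 → ℝ) (Φ : ℝ → PS3 → PS3) (t l L : ℝ) : Prop :=
  (∀ s₀ : PS3, ‖s₀.2‖ ≤ L / 10 →
    Icc (-L) L ⊆ (fun x => (Φ t x).2 1) '' J2 H s₀ l) ∧
  (∀ x y : PS3, x.1 1 = y.1 1 → x.1 2 = y.1 2 → x.2 = y.2 →
    (Φ t x).2 1 = (Φ t y).2 1)

/-- The denominator q_n of the n-th convergent of α. -/
def cfq (α : ℝ) (n : ℕ) : ℝ := (GenContFract.of α).dens n

/-- The numerator p_n of the n-th convergent of α. -/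
def cfp (α : ℝ) (n : ℕ) : ℝ := (GenContFract.of α).nums n

/-- ω = (α, α', 1) belongs to the Yoccoz class Y. -/
def MemY (α α' : ℝ) : Prop :=
  Irrational α ∧ Irrational α' ∧
    ∀ n : ℕ, 1 ≤ n →
      Real.exp (cfq α n) ≤ cfq α' n / 4 ∧ Real.exp (cfq α' n) ≤ cfq α (n + 1) / 4

/-- The perturbation h of formula (4) of the paper. -/
def hY (α α' : ℝ) (θ : Fin 3 → ℝ) : ℝ :=
  -(∑' n : ℕ, Real.exp (-cfq α (n + 1)) *
      Real.cos (2 * π * (cfq α (n + 1) * θ 0 - cfp α (n + 1) * θ 2)))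
  - ∑' n : ℕ, Real.exp (-cfq α' (n + 1)) *
      Real.cos (2 * π * (cfq α' (n + 1) * θ 1 - cfp α' (n + 1) * θ 2))

open Function

/-!
The angles move linearly, `θ(t) = θ + tω`, so `r₁(t) - r₁(0)` is an explicit series over the
modes `k` of `h`, involving only `θ₁` and `θ₃` (hence independent of `θ₂`); its `k`-th term has
amplitude `qₖ e^{-qₖ} / δₖ` with the small divisor `δₖ = qₖ α - pₖ` and oscillates in `t` with
frequency `δₖ`. For `t ∈ [e^{qₙ}, qₙ₊₁ / 4]` one has `|δₙ t| ≤ 1/4`, so by Jordan's inequality the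
resonant mode `k = n` has amplitude at least `4 qₙ e^{-qₙ} t ≥ 4 qₙ`, and moving `θ₁` by `1 / qₙ`
runs its phase through a full period. All the other modes together stay below `2 qₙ`: the lower
ones because `|δₖ| ≥ 1 / (qₖ + qₖ₊₁)`, the higher ones because `t ≤ qₙ₊₁ / 4 ≤ qₖ / 4`, both
summed thanks to the super-exponential growth of the denominators in `Y`. The intermediate
value theorem then fills `[-qₙ, qₙ]`. The case of `r₂`, `θ₂` and `α'` is symmetric.
-/

section ContinuedFraction

open GenContFract

variable {v : ℝ}

theorem Irrational.not_terminatedAt_genContFract (hv : Irrational v) (n : ℕ) :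
    ¬(GenContFract.of v).TerminatedAt n := fun h =>
  hv <| by
    obtain ⟨q, hq⟩ := (terminates_iff_rat v).1 ⟨n, h⟩
    exact ⟨q, hq.symm⟩

theorem one_le_cfq (hv : Irrational v) (n : ℕ) : 1 ≤ cfq v n := by
  calc (1 : ℝ) ≤ Nat.fib (n + 1) := by exact_mod_cast Nat.fib_pos.2 n.succ_pos
    _ ≤ cfq v n := succ_nth_fib_le_of_nth_den (Or.inr (hv.not_terminatedAt_genContFract _))

theorem cfq_pos (hv : Irrational v) (n : ℕ) : 0 < cfq v n :=
  one_pos.trans_le (one_le_cfq hv n)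

theorem monotone_cfq : Monotone (cfq v) :=
  monotone_nat_of_le_succ fun _ => of_den_mono

theorem cfq_add_cfq_le (hv : Irrational v) (n : ℕ) :
    cfq v n + cfq v (n + 1) ≤ cfq v (n + 2) := by
  obtain ⟨gp, hgp⟩ : ∃ gp, (GenContFract.of v).s.get? (n + 1) = some gp :=
    Option.ne_none_iff_exists'.1 (hv.not_terminatedAt_genContFract (n + 1))
  have ha : gp.a = 1 := of_partNum_eq_one (partNum_eq_s_a hgp)
  have hb : 1 ≤ gp.b := of_one_le_get?_partDen (partDen_eq_s_b hgp)
  have hrec : cfq v (n + 2) = gp.b * cfq v (n + 1) + gp.a * cfq v n := dens_recurrence hgp rfl rfl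
  rw [hrec, ha]
  nlinarith [cfq_pos hv (n + 1)]

theorem abs_cfq_mul_sub_cfp_le (hv : Irrational v) (n : ℕ) :
    |cfq v n * v - cfp v n| ≤ 1 / cfq v (n + 1) := by
  have hq := cfq_pos hv n
  have h := abs_sub_convs_le (hv.not_terminatedAt_genContFract n)
  rw [conv_eq_num_div_den] at h
  calc |cfq v n * v - cfp v n| = cfq v n * |v - cfp v n / cfq v n| := by
        rw [← abs_of_pos hq, ← abs_mul, abs_of_pos hq, mul_sub, mul_div_cancel₀ _ hq.ne']
    _ ≤ cfq v n * (1 / (cfq v n * cfq v (n + 1))) := by gcongr; exact h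
    _ = 1 / cfq v (n + 1) := by field_simp

/-- Read off from the determinant identity `pₙ qₙ₊₁ - qₙ pₙ₊₁ = ±1` and the upper bound at
`n + 1`. -/
theorem one_div_cfq_add_cfq_le_abs (hv : Irrational v) (n : ℕ) :
    1 / (cfq v n + cfq v (n + 1)) ≤ |cfq v n * v - cfp v n| := by
  have hdet : cfp v n * cfq v (n + 1) - cfq v n * cfp v (n + 1) = (-1) ^ (n + 1) :=
    SimpContFract.determinant (s := SimpContFract.of v) (hv.not_terminatedAt_genContFract n)
  have hq := cfq_pos hv n
  have hq₁ := cfq_pos hv (n + 1)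
  have hq₂ := cfq_pos hv (n + 2)
  have hnext := abs_cfq_mul_sub_cfp_le hv (n + 1)
  have hsum := cfq_add_cfq_le hv n
  have hone : 1 ≤ cfq v (n + 1) * |cfq v n * v - cfp v n|
      + cfq v n * |cfq v (n + 1) * v - cfp v (n + 1)| := by
    calc (1 : ℝ) = |cfq v (n + 1) * (cfq v n * v - cfp v n)
          - cfq v n * (cfq v (n + 1) * v - cfp v (n + 1))| := by
          rw [show cfq v (n + 1) * (cfq v n * v - cfp v n)
            - cfq v n * (cfq v (n + 1) * v - cfp v (n + 1)) = -(-1) ^ (n + 1) by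
            rw [← hdet]; ring]
          simp
      _ ≤ _ := by
          refine (abs_sub _ _).trans_eq ?_
          rw [abs_mul, abs_mul, abs_of_pos hq₁, abs_of_pos hq]
  rw [div_le_iff₀ (by positivity)]
  have : cfq v n * |cfq v (n + 1) * v - cfp v (n + 1)| ≤ cfq v n / (cfq v n + cfq v (n + 1)) :=
    calc _ ≤ cfq v n * (1 / cfq v (n + 2)) := by gcongr
      _ ≤ _ := by rw [mul_one_div]; gcongr
  rw [le_div_iff₀ (by positivity)] at this
  nlinarith

end ContinuedFraction

theorem two_mul_le_sin_pi_mul_div {δ t : ℝ} (hδ : δ ≠ 0) (ht : 0 ≤ t) (hδt : |δ| * t ≤ 1 / 2) :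
    2 * t ≤ sin (π * δ * t) / δ := by
  have habs : sin (π * δ * t) / δ = sin (π * |δ| * t) / |δ| := by
    rcases hδ.lt_or_gt with hneg | hpos
    · rw [abs_of_neg hneg, mul_neg, neg_mul, Real.sin_neg, neg_div_neg_eq]
    · rw [abs_of_pos hpos]
  have hpos : 0 < |δ| := abs_pos.2 hδ
  rw [habs, le_div_iff₀ hpos]
  have hjordan := Real.mul_le_sin (x := π * |δ| * t) (by positivity)
    (by nlinarith [Real.pi_pos])
  calc 2 * t * |δ| = 2 / π * (π * |δ| * t) := by field_simp
    _ ≤ _ := hjordan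

theorem exists_sin_add_two_pi_mul_eq (φ v : ℝ) :
    ∃ u ∈ Icc (0 : ℝ) 1, sin (φ + 2 * π * u) = sin v := by
  set u := (v - φ) / (2 * π)
  refine ⟨Int.fract u, ⟨Int.fract_nonneg u, (Int.fract_lt_one u).le⟩, ?_⟩
  have : φ + 2 * π * Int.fract u = v + (-⌊u⌋ : ℤ) * (2 * π) := by
    rw [← Int.self_sub_floor]
    simp only [u]
    push_cast
    field_simp
    ring
  rw [this, Real.sin_add_int_mul_two_pi]

def driftTerm (A δ c t : ℝ) : ℝ := A / δ * (cos (2 * π * (c + δ * t)) - cos (2 * π * c))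

theorem driftTerm_zero (A δ c : ℝ) : driftTerm A δ c 0 = 0 := by simp [driftTerm]

theorem hasDerivAt_driftTerm (A c t : ℝ) {δ : ℝ} (hδ : δ ≠ 0) :
    HasDerivAt (driftTerm A δ c) (-(2 * π * (A * sin (2 * π * (c + δ * t))))) t := by
  have h := ((((hasDerivAt_id t).const_mul δ).const_add c).const_mul (2 * π)).cos
  refine ((h.sub_const (cos (2 * π * c))).const_mul (A / δ)).congr_deriv ?_
  simp only [id]
  field_simp

theorem continuous_driftTerm (A δ t : ℝ) : Continuous fun c => driftTerm A δ c t := by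
  unfold driftTerm; fun_prop

theorem abs_driftTerm_le_mul (A δ c t : ℝ) : |driftTerm A δ c t| ≤ 2 * π * |A| * |t| := by
  rcases eq_or_ne δ 0 with rfl | hδ
  · simp [driftTerm]; positivity
  have hcos := Real.abs_cos_sub_cos_le (2 * π * (c + δ * t)) (2 * π * c)
  rw [show 2 * π * (c + δ * t) - 2 * π * c = 2 * π * (δ * t) by ring,
    abs_mul (2 * π), abs_of_pos Real.two_pi_pos, abs_mul] at hcos
  calc |driftTerm A δ c t| = |A| / |δ| * |cos (2 * π * (c + δ * t)) - cos (2 * π * c)| := by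
        rw [driftTerm, abs_mul, abs_div]
    _ ≤ |A| / |δ| * (2 * π * (|δ| * |t|)) := by gcongr
    _ = 2 * π * |A| * |t| := by field_simp

theorem abs_driftTerm_le_div (A δ c t : ℝ) : |driftTerm A δ c t| ≤ 2 * |A| / |δ| := by
  have hcos : |cos (2 * π * (c + δ * t)) - cos (2 * π * c)| ≤ 2 := by
    rw [abs_le]; constructor <;> linarith [neg_one_le_cos (2 * π * (c + δ * t)),
      cos_le_one (2 * π * (c + δ * t)), neg_one_le_cos (2 * π * c), cos_le_one (2 * π * c)]
  calc |driftTerm A δ c t| = |A| / |δ| * |cos (2 * π * (c + δ * t)) - cos (2 * π * c)| := by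
        rw [driftTerm, abs_mul, abs_div]
    _ ≤ |A| / |δ| * 2 := by gcongr
    _ = 2 * |A| / |δ| := by ring

theorem driftTerm_eq (A δ c t : ℝ) :
    driftTerm A δ c t = -(2 * A * (sin (π * δ * t) / δ)) * sin (2 * π * c + π * δ * t) := by
  rw [driftTerm, Real.cos_sub_cos]
  ring_nf

theorem exists_driftTerm_add_eq (A δ c t v : ℝ) : ∃ u ∈ Icc (0 : ℝ) 1,
    driftTerm A δ (c + u) t = -(2 * A * (sin (π * δ * t) / δ)) * sin v := by
  obtain ⟨u, hu, hsin⟩ := exists_sin_add_two_pi_mul_eq (2 * π * c + π * δ * t) v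
  refine ⟨u, hu, ?_⟩
  rw [driftTerm_eq, ← hsin]
  ring_nf

theorem norm_two_pi_mul_mul_sin_le (A x : ℝ) : ‖-(2 * π * (A * sin x))‖ ≤ 2 * π * ‖A‖ := by
  rw [norm_neg, norm_mul, norm_mul A, Real.norm_of_nonneg Real.two_pi_pos.le]
  gcongr
  exact mul_le_of_le_one_right (norm_nonneg _) (Real.abs_sin_le_one _)

def cosSeries (Q P : ℕ → ℝ) (y z : ℝ) : ℝ :=
  ∑' k, exp (-Q k) * cos (2 * π * (Q k * y - P k * z))

def sinSeries (Q P : ℕ → ℝ) (y z : ℝ) : ℝ :=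
  ∑' k, Q k * exp (-Q k) * sin (2 * π * (Q k * y - P k * z))

/-- `∫₀ᵗ 2π sinSeries Q P (y + a s) (z + s) ds`, integrated mode by mode. The antiderivatives
`cos (…) / (Qₖ a - Pₖ)` of the single modes are not summable: only their increments are. -/
def driftSeries (Q P : ℕ → ℝ) (a y z t : ℝ) : ℝ :=
  ∑' k, driftTerm (Q k * exp (-Q k)) (Q k * a - P k) (Q k * y - P k * z) t


section Derivatives

variable {Q P : ℕ → ℝ}

theorem hasDerivAt_cosSeries (h₀ : Summable fun k => exp (-Q k))
    (h₁ : Summable fun k => Q k * exp (-Q k)) (y z : ℝ) :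
    HasDerivAt (fun y => cosSeries Q P y z) (-(2 * π * sinSeries Q P y z)) y := by
  have hterm : ∀ k y, HasDerivAt (fun y => exp (-Q k) * cos (2 * π * (Q k * y - P k * z)))
      (-(2 * π * (Q k * exp (-Q k) * sin (2 * π * (Q k * y - P k * z))))) y := fun k y =>
    (((((hasDerivAt_id y).const_mul (Q k)).sub_const (P k * z)).const_mul (2 * π)).cos.const_mul
      _).congr_deriv (by simp only [id]; ring)
  have hsum0 : Summable fun k => exp (-Q k) * cos (2 * π * (Q k * 0 - P k * z)) :=
    h₀.of_norm_bounded fun k => by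
      rw [norm_mul, Real.norm_of_nonneg (exp_pos _).le]
      exact mul_le_of_le_one_right (exp_pos _).le (Real.abs_cos_le_one _)
  have h := hasDerivAt_tsum (h₁.norm.mul_left (2 * π)) hterm
    (fun k _ => norm_two_pi_mul_mul_sin_le _ _) hsum0 y
  rwa [tsum_neg, tsum_mul_left] at h

theorem hasDerivAt_driftSeries {a : ℝ} (hδ : ∀ k, Q k * a - P k ≠ 0)
    (h₁ : Summable fun k => Q k * exp (-Q k)) (y z t : ℝ) :
    HasDerivAt (driftSeries Q P a y z) (-(2 * π * sinSeries Q P (y + a * t) (z + t))) t := by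
  have h := hasDerivAt_tsum (h₁.norm.mul_left (2 * π))
    (fun k s => hasDerivAt_driftTerm _ (Q k * y - P k * z) s (hδ k))
    (fun k _ => norm_two_pi_mul_mul_sin_le _ _)
    (y₀ := 0) (by simp only [driftTerm_zero]; exact summable_zero) t
  rw [tsum_neg, tsum_mul_left] at h
  have hphase : sinSeries Q P (y + a * t) (z + t) = ∑' k, Q k * exp (-Q k) *
      sin (2 * π * (Q k * y - P k * z + (Q k * a - P k) * t)) :=
    tsum_congr fun k => by ring_nf
  rw [hphase]
  exact h

theorem continuous_driftSeries {a : ℝ} (h₁ : Summable fun k => Q k * exp (-Q k)) (z t : ℝ) :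
    Continuous fun y => driftSeries Q P a y z t :=
  continuous_tsum (fun k => (continuous_driftTerm _ _ t).comp (by fun_prop))
    ((h₁.norm.mul_left (2 * π)).mul_right |t|) fun k y => by
      simpa only [Real.norm_eq_abs] using abs_driftTerm_le_mul _ _ _ t

end Derivatives

/-- What the argument uses of `Qₖ = q_{k+1}`, `Pₖ = p_{k+1}`, the convergents of `a = α` (or `α'`)
for `(α, α', 1) ∈ Y`: the two-sided bounds on `|Qₖ a - Pₖ|`, and a growth fast enough for the
non-resonant modes to be negligible. -/
structure FastConvergents (Q P : ℕ → ℝ) (a : ℝ) : Prop where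
  one_le : ∀ k, 1 ≤ Q k
  mono : Monotone Q
  abs_sub_le : ∀ k, |Q k * a - P k| ≤ 1 / Q (k + 1)
  le_abs_sub : ∀ k, 1 / (Q k + Q (k + 1)) ≤ |Q k * a - P k|
  summable : Summable fun k => Q (k + 1) ^ 2 * exp (-Q (k + 1))
  tsum_le : ∑' k, Q (k + 1) ^ 2 * exp (-Q (k + 1)) ≤ 1 / 10

namespace FastConvergents

variable {Q P : ℕ → ℝ} {a : ℝ}

theorem pos (h : FastConvergents Q P a) (k : ℕ) : 0 < Q k := one_pos.trans_le (h.one_le k)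

theorem sub_ne_zero (h : FastConvergents Q P a) (k : ℕ) : Q k * a - P k ≠ 0 := by
  have := h.pos k
  have := h.pos (k + 1)
  exact abs_pos.1 <| lt_of_lt_of_le (by positivity) (h.le_abs_sub k)

theorem summable_sq_mul_exp_neg (h : FastConvergents Q P a) :
    Summable fun k => Q k ^ 2 * exp (-Q k) :=
  (summable_nat_add_iff 1).1 h.summable

theorem summable_mul_exp_neg (h : FastConvergents Q P a) :
    Summable fun k => Q k * exp (-Q k) :=
  h.summable_sq_mul_exp_neg.of_nonneg_of_le (fun k => by have := h.pos k; positivity)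
    fun k => by have := h.one_le k; gcongr; nlinarith

theorem summable_exp_neg (h : FastConvergents Q P a) : Summable fun k => exp (-Q k) :=
  h.summable_mul_exp_neg.of_nonneg_of_le (fun k => by positivity)
    fun k => le_mul_of_one_le_left (by positivity) (h.one_le k)

/-- Below the resonant mode `m` the small divisor is controlled by `Qₖ₊₁ ≤ Q_m`, above it the
time `t ≤ Q_{m+1} / 4 ≤ Qₖ / 4` is. -/
theorem abs_driftTerm_le_of_ne (h : FastConvergents Q P a) {m k : ℕ} (hk : k ≠ m) {t : ℝ}
    (ht₀ : 0 ≤ t) (ht : t ≤ Q (m + 1) / 4) (c : ℝ) :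
    |driftTerm (Q k * exp (-Q k)) (Q k * a - P k) c t|
      ≤ 4 * Q m * (if k = 0 then exp (-1) else Q k ^ 2 * exp (-Q k)) := by
  have hQk := h.one_le k
  have hQm := h.one_le m
  have hA : 0 < Q k * exp (-Q k) := by positivity
  have hA_le : Q k * exp (-Q k) ≤ Q k ^ 2 * exp (-Q k) := by
    rw [sq, mul_assoc]; exact le_mul_of_one_le_left hA.le hQk
  rw [← abs_of_pos hA] at hA_le
  rcases hk.lt_or_gt with hlt | hgt
  · have hδ : 1 / |Q k * a - P k| ≤ Q k + Q (k + 1) := by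
      rw [one_div_le (abs_pos.2 (h.sub_ne_zero k)) (by linarith [h.one_le (k + 1)])]
      exact h.le_abs_sub k
    have hQ : Q k + Q (k + 1) ≤ 2 * Q m := by
      linarith [h.mono hlt.le, h.mono (Nat.succ_le_of_lt hlt)]
    have hweight : |Q k * exp (-Q k)| ≤ if k = 0 then exp (-1) else Q k ^ 2 * exp (-Q k) := by
      split_ifs
      · rw [abs_of_pos hA]; exact Real.mul_exp_neg_le_exp_neg_one _
      · exact hA_le
    calc _ ≤ 2 * |Q k * exp (-Q k)| / |Q k * a - P k| := abs_driftTerm_le_div _ _ _ _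
      _ = 2 * |Q k * exp (-Q k)| * (1 / |Q k * a - P k|) := by ring
      _ ≤ 2 * |Q k * exp (-Q k)| * (2 * Q m) := by gcongr; exact hδ.trans hQ
      _ ≤ _ := by nlinarith [abs_nonneg (Q k * exp (-Q k))]
  · have hQk_ge : Q (m + 1) ≤ Q k := h.mono hgt
    rw [if_neg (by omega)]
    calc _ ≤ 2 * π * |Q k * exp (-Q k)| * |t| := abs_driftTerm_le_mul _ _ _ _
      _ ≤ 2 * π * (Q k * exp (-Q k)) * (Q k / 4) := by
          rw [abs_of_pos hA, abs_of_nonneg ht₀]; gcongr; linarith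
      _ = π / 2 * (Q k ^ 2 * exp (-Q k)) := by ring
      _ ≤ 4 * Q m * (Q k ^ 2 * exp (-Q k)) := by
          gcongr; linarith [Real.pi_lt_four]

theorem abs_tsum_ite_driftTerm_le (h : FastConvergents Q P a) {m : ℕ} {t : ℝ} (ht₀ : 0 ≤ t)
    (ht : t ≤ Q (m + 1) / 4) (c : ℕ → ℝ) :
    |∑' k, if k = m then 0 else driftTerm (Q k * exp (-Q k)) (Q k * a - P k) (c k) t|
      ≤ 2 * Q m := by
  set w : ℕ → ℝ := fun k => if k = 0 then exp (-1) else Q k ^ 2 * exp (-Q k)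
  have hw : Summable w := (summable_nat_add_iff 1).1 (by simpa [w] using h.summable)
  have hw_le : ∑' k, w k ≤ 1 / 2 := by
    rw [hw.tsum_eq_zero_add]
    simp only [w, if_pos, Nat.add_one_ne_zero, if_false]
    have : exp (-1) ≤ 2 / 5 := by
      rw [Real.exp_neg, inv_le_comm₀ (exp_pos _) (by norm_num)]
      linarith [Real.exp_one_gt_d9]
    linarith [h.tsum_le]
  have hbound : ∀ k, ‖if k = m then 0 else driftTerm (Q k * exp (-Q k)) (Q k * a - P k) (c k) t‖
      ≤ 4 * Q m * w k := fun k => by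
    split_ifs with hk
    · simp only [norm_zero]; have := h.pos m; positivity
    · exact h.abs_driftTerm_le_of_ne hk ht₀ ht (c k)
  calc _ ≤ ∑' k, 4 * Q m * w k := tsum_of_norm_bounded (hw.mul_left _).hasSum hbound
    _ = 4 * Q m * ∑' k, w k := tsum_mul_left
    _ ≤ 2 * Q m := by nlinarith [h.pos m]

theorem summable_driftTerm (h : FastConvergents Q P a) (c : ℕ → ℝ) (t : ℝ) :
    Summable fun k => driftTerm (Q k * exp (-Q k)) (Q k * a - P k) (c k) t :=
  ((h.summable_mul_exp_neg.abs.mul_left (2 * π)).mul_right |t|).of_norm_bounded fun k => by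
    simpa only [Real.norm_eq_abs] using abs_driftTerm_le_mul _ _ _ t

/-- As `s` ranges over `[0, 1 / Q_m]`, the phase of the resonant mode `m` runs through a full
period. -/
theorem exists_abs_driftSeries_add_le (h : FastConvergents Q P a) {m : ℕ} {t : ℝ} (ht₀ : 0 ≤ t)
    (ht : t ≤ Q (m + 1) / 4) (y z v : ℝ) :
    ∃ s ∈ Icc 0 (1 / Q m), |driftSeries Q P a (y + s) z t
      + 2 * (Q m * exp (-Q m)) * (sin (π * (Q m * a - P m) * t) / (Q m * a - P m)) * sin v|
        ≤ 2 * Q m := by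
  have hQm := h.pos m
  obtain ⟨u, hu, hterm⟩ := exists_driftTerm_add_eq (Q m * exp (-Q m)) (Q m * a - P m)
    (Q m * y - P m * z) t v
  refine ⟨u / Q m, ⟨div_nonneg hu.1 hQm.le, by gcongr; exact hu.2⟩, ?_⟩
  have hphase : Q m * (y + u / Q m) - P m * z = Q m * y - P m * z + u := by
    field_simp; ring
  rw [driftSeries, (h.summable_driftTerm _ t).tsum_eq_add_tsum_ite m, hphase, hterm]
  convert h.abs_tsum_ite_driftTerm_le ht₀ ht (fun k => Q k * (y + u / Q m) - P k * z) using 2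
  ring

theorem four_mul_le_resonant_amplitude (h : FastConvergents Q P a) {m : ℕ} {t : ℝ}
    (ht : t ∈ Icc (exp (Q m)) (Q (m + 1) / 4)) :
    4 * Q m ≤ 2 * (Q m * exp (-Q m)) * (sin (π * (Q m * a - P m) * t) / (Q m * a - P m)) := by
  have hQm := h.pos m
  have hQm₁ := h.pos (m + 1)
  have ht₀ : 0 ≤ t := (exp_pos _).le.trans ht.1
  have hδt : |Q m * a - P m| * t ≤ 1 / 2 :=
    calc |Q m * a - P m| * t ≤ 1 / Q (m + 1) * (Q (m + 1) / 4) :=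
          mul_le_mul (h.abs_sub_le m) ht.2 ht₀ (by positivity)
      _ ≤ 1 / 2 := by field_simp; norm_num
  have hjordan := two_mul_le_sin_pi_mul_div (h.sub_ne_zero m) ht₀ hδt
  have hAt : Q m ≤ Q m * exp (-Q m) * t :=
    calc Q m = Q m * exp (-Q m) * exp (Q m) := by rw [mul_assoc, ← exp_add]; simp
      _ ≤ Q m * exp (-Q m) * t := by gcongr; exact ht.1
  have hA : 0 ≤ Q m * exp (-Q m) := by positivity
  nlinarith [mul_le_mul_of_nonneg_left hjordan hA]

theorem Icc_subset_image_driftSeries (h : FastConvergents Q P a) {m : ℕ} {t : ℝ}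
    (ht : t ∈ Icc (exp (Q m)) (Q (m + 1) / 4)) {r : ℝ} (hr : |r| ≤ Q m / 10) (y z : ℝ) :
    Icc (-Q m) (Q m) ⊆ (fun s => r + driftSeries Q P a (y + s) z t) '' Icc 0 (1 / Q m) := by
  have ht₀ : 0 ≤ t := (exp_pos _).le.trans ht.1
  have hamp := h.four_mul_le_resonant_amplitude ht
  obtain ⟨s₁, hs₁, h₁⟩ := h.exists_abs_driftSeries_add_le ht₀ ht.2 y z (π / 2)
  obtain ⟨s₂, hs₂, h₂⟩ := h.exists_abs_driftSeries_add_le ht₀ ht.2 y z (-(π / 2))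
  rw [sin_pi_div_two, mul_one] at h₁
  rw [sin_neg, sin_pi_div_two, mul_neg_one] at h₂
  have hr' := abs_le.1 hr
  have hcont : Continuous fun s => r + driftSeries Q P a (y + s) z t :=
    continuous_const.add ((continuous_driftSeries h.summable_mul_exp_neg z t).comp
      (continuous_const.add continuous_id))
  have hlow : r + driftSeries Q P a (y + s₁) z t ≤ -Q m := by linarith [(abs_le.1 h₁).2]
  have hhigh : Q m ≤ r + driftSeries Q P a (y + s₂) z t := by linarith [(abs_le.1 h₂).1]
  intro w hw
  obtain ⟨s, hs, hsw⟩ := intermediate_value_uIcc hcont.continuousOn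
    (Icc_subset_uIcc ⟨hlow.trans hw.1, hw.2.trans hhigh⟩)
  exact ⟨s, uIcc_subset_Icc hs₁ hs₂ hs, hsw⟩

end FastConvergents

theorem eq_add_sub_of_hasDerivAt {f F f' : ℝ → ℝ} (hf : ∀ s, HasDerivAt f (f' s) s)
    (hF : ∀ s, HasDerivAt F (f' s) s) (t : ℝ) : f t = f 0 + (F t - F 0) := by
  have h := is_const_of_deriv_eq_zero (f := f - F)
    (fun s => ((hf s).sub (hF s)).differentiableAt)
    (fun s => ((hf s).sub (hF s)).deriv.trans (sub_self _)) t 0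
  simp only [Pi.sub_apply] at h
  linarith

theorem sum_update_mul {ι : Type*} [Fintype ι] [DecidableEq ι] (r ω : ι → ℝ) (i : ι) (y : ℝ) :
    ∑ j, update r i y j * ω j = ∑ j, r j * ω j + (y - r i) * ω i := by
  rw [← Finset.add_sum_erase _ _ (Finset.mem_univ i),
    ← Finset.add_sum_erase _ _ (Finset.mem_univ i), update_self,
    Finset.sum_congr rfl fun j hj => by rw [update_of_ne (Finset.ne_of_mem_erase hj)]]
  ring

/-- `H(θ, r) = ⟨r, ω⟩ + h(θ)`, stated through the change of `H` under a change of one action. -/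
def IsAffineInActions (H : PS3 → ℝ) (ω : Fin 3 → ℝ) : Prop :=
  ∀ θ r j y, H (θ, update r j y) = H (θ, r) + (y - r j) * ω j

/-- `θᵢ` enters `H` only through the term `-cosSeries Q P θᵢ θ₃`. -/
def HasCosSeriesInAngle (H : PS3 → ℝ) (i : Fin 3) (Q P : ℕ → ℝ) : Prop :=
  ∀ θ r y, H (update θ i y, r) = H (θ, r) - cosSeries Q P y (θ 2) + cosSeries Q P (θ i) (θ 2)

section HamiltonianFlow

variable {H : PS3 → ℝ} {Φ : ℝ → PS3 → PS3} {ω : Fin 3 → ℝ}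

theorem IsHamFlow.fst_apply (hΦ : IsHamFlow H Φ)
    (hHr : IsAffineInActions H ω)
    (x : PS3) (τ : ℝ) (j : Fin 3) : (Φ τ x).1 j = x.1 j + ω j * τ := by
  have hvel : ∀ θ r, deriv (fun y => H (θ, update r j y)) (r j) = ω j := fun θ r => by
    simp_rw [hHr θ r j]
    simp
  have h := eq_add_sub_of_hasDerivAt (fun s => by simpa only [hvel] using hΦ.2.1 x s j)
    (fun s => by simpa using (hasDerivAt_id s).const_mul (ω j)) τ
  simpa [hΦ.1 x] using h

theorem IsHamFlow.snd_apply (hΦ : IsHamFlow H Φ)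
    (hHr : IsAffineInActions H ω) (hω₂ : ω 2 = 1)
    {Q P : ℕ → ℝ} {i : Fin 3}
    (hHθ : HasCosSeriesInAngle H i Q P)
    (h₀ : Summable fun k => exp (-Q k)) (h₁ : Summable fun k => Q k * exp (-Q k))
    (hδ : ∀ k, Q k * ω i - P k ≠ 0) (x : PS3) (τ : ℝ) :
    (Φ τ x).2 i = x.2 i + driftSeries Q P (ω i) (x.1 i) (x.1 2) τ := by
  have hforce : ∀ θ r, deriv (fun y => H (update θ i y, r)) (θ i)
      = 2 * π * sinSeries Q P (θ i) (θ 2) := fun θ r => by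
    simp_rw [hHθ θ r]
    simpa using (((hasDerivAt_cosSeries h₀ h₁ (θ i) (θ 2)).const_sub (H (θ, r))).add_const
      (cosSeries Q P (θ i) (θ 2))).deriv
  have hr : ∀ s, HasDerivAt (fun s => (Φ s x).2 i)
      (-(2 * π * sinSeries Q P (x.1 i + ω i * s) (x.1 2 + s))) s := fun s => by
    have h := hΦ.2.2 x s i
    rwa [hforce, hΦ.fst_apply hHr x s i, hΦ.fst_apply hHr x s 2, hω₂, one_mul] at h
  have h := eq_add_sub_of_hasDerivAt hr (hasDerivAt_driftSeries hδ h₁ (x.1 i) (x.1 2)) τ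
  simpa [hΦ.1 x, driftSeries, driftTerm_zero] using h

/-- The point of `J⁽ⁱ⁾(s₀, l)` at parameter `s`. Solving `H = H(s₀)` for `r₃` is explicit because
`H` is affine in `r₃` with slope `ω₃ = 1`. -/
def energyCurve (H : PS3 → ℝ) (s₀ : PS3) (i : Fin 3) (s : ℝ) : PS3 :=
  (update s₀.1 i (s₀.1 i + s),
    update s₀.2 2 (s₀.2 2 + (H s₀ - H (update s₀.1 i (s₀.1 i + s), s₀.2))))

theorem energyCurve_energy (hHr : IsAffineInActions H ω)
    (hω₂ : ω 2 = 1) (s₀ : PS3) (i : Fin 3) (s : ℝ) : H (energyCurve H s₀ i s) = H s₀ := by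
  rw [energyCurve, hHr, hω₂]
  ring

theorem energyCurve_mem_J1 (hHr : IsAffineInActions H ω)
    (hω₂ : ω 2 = 1) (s₀ : PS3) {l s : ℝ} (hs : s ∈ Icc 0 l) :
    energyCurve H s₀ 0 s ∈ J1 H s₀ l :=
  ⟨⟨s, hs, by simp [energyCurve]⟩, by simp [energyCurve], by simp [energyCurve],
    by simp [energyCurve], by simp [energyCurve], energyCurve_energy hHr hω₂ s₀ 0 s⟩

theorem energyCurve_mem_J2 (hHr : IsAffineInActions H ω)
    (hω₂ : ω 2 = 1) (s₀ : PS3) {l s : ℝ} (hs : s ∈ Icc 0 l) :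
    energyCurve H s₀ 1 s ∈ J2 H s₀ l :=
  ⟨by simp [energyCurve], ⟨s, hs, by simp [energyCurve]⟩, by simp [energyCurve],
    by simp [energyCurve], by simp [energyCurve], energyCurve_energy hHr hω₂ s₀ 1 s⟩

variable {Q P : ℕ → ℝ} {i : Fin 3}

theorem IsHamFlow.Icc_subset_image_energyCurve (hΦ : IsHamFlow H Φ)
    (hHr : IsAffineInActions H ω) (hω₂ : ω 2 = 1)
    (hi : i ≠ 2) (hQP : FastConvergents Q P (ω i))
    (hHθ : HasCosSeriesInAngle H i Q P)
    {m : ℕ} {t : ℝ} (ht : t ∈ Icc (exp (Q m)) (Q (m + 1) / 4)) {s₀ : PS3}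
    (hs₀ : ‖s₀.2‖ ≤ Q m / 10) :
    Icc (-Q m) (Q m) ⊆ (fun s => (Φ t (energyCurve H s₀ i s)).2 i) '' Icc 0 (1 / Q m) := by
  have hcurve : (fun s => (Φ t (energyCurve H s₀ i s)).2 i)
      = fun s => s₀.2 i + driftSeries Q P (ω i) (s₀.1 i + s) (s₀.1 2) t := funext fun s => by
    rw [hΦ.snd_apply hHr hω₂ hHθ hQP.summable_exp_neg hQP.summable_mul_exp_neg hQP.sub_ne_zero]
    simp [energyCurve, hi, Ne.symm hi]
  rw [hcurve]
  exact hQP.Icc_subset_image_driftSeries ht ((norm_le_pi_norm s₀.2 i).trans hs₀) _ _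

theorem IsHamFlow.stretching1 (hΦ : IsHamFlow H Φ)
    (hHr : IsAffineInActions H ω) (hω₂ : ω 2 = 1)
    (hQP : FastConvergents Q P (ω 0))
    (hHθ : HasCosSeriesInAngle H 0 Q P)
    {m : ℕ} {t : ℝ} (ht : t ∈ Icc (exp (Q m)) (Q (m + 1) / 4)) :
    Stretching1 H Φ t (1 / Q m) (Q m) := by
  have hflow := hΦ.snd_apply hHr hω₂ hHθ hQP.summable_exp_neg hQP.summable_mul_exp_neg
    hQP.sub_ne_zero
  refine ⟨fun s₀ hs₀ w hw => ?_, fun x y h₀ h₂ hr => by rw [hflow, hflow, h₀, h₂, hr]⟩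
  obtain ⟨s, hs, rfl⟩ :=
    hΦ.Icc_subset_image_energyCurve hHr hω₂ (by decide) hQP hHθ ht hs₀ hw
  exact ⟨_, energyCurve_mem_J1 hHr hω₂ s₀ hs, rfl⟩

theorem IsHamFlow.stretching2 (hΦ : IsHamFlow H Φ)
    (hHr : IsAffineInActions H ω) (hω₂ : ω 2 = 1)
    (hQP : FastConvergents Q P (ω 1))
    (hHθ : HasCosSeriesInAngle H 1 Q P)
    {m : ℕ} {t : ℝ} (ht : t ∈ Icc (exp (Q m)) (Q (m + 1) / 4)) :
    Stretching2 H Φ t (1 / Q m) (Q m) := by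
  have hflow := hΦ.snd_apply hHr hω₂ hHθ hQP.summable_exp_neg hQP.summable_mul_exp_neg
    hQP.sub_ne_zero
  refine ⟨fun s₀ hs₀ w hw => ?_, fun x y h₁ h₂ hr => by rw [hflow, hflow, h₁, h₂, hr]⟩
  obtain ⟨s, hs, rfl⟩ :=
    hΦ.Icc_subset_image_energyCurve hHr hω₂ (by decide) hQP hHθ ht hs₀ hw
  exact ⟨_, energyCurve_mem_J2 hHr hω₂ s₀ hs, rfl⟩

end HamiltonianFlow

theorem sq_mul_exp_neg_le {x : ℝ} (hx : 0 < x) : x ^ 2 * exp (-x) ≤ 24 / x ^ 2 := by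
  have h := Real.pow_div_factorial_le_exp x hx.le 4
  rw [Real.exp_neg, ← div_eq_mul_inv, div_le_div_iff₀ (by positivity) (by positivity)]
  norm_num [Nat.factorial] at h
  nlinarith

theorem summable_sq_mul_exp_neg_and_tsum_le {Q : ℕ → ℝ} (h₀ : 16 ≤ Q 0)
    (hQ : ∀ k, 4 * Q k ≤ Q (k + 1)) :
    Summable (fun k => Q k ^ 2 * exp (-Q k)) ∧ ∑' k, Q k ^ 2 * exp (-Q k) ≤ 1 / 10 := by
  have hgeom : ∀ k, 16 * 4 ^ k ≤ Q k := by
    intro k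
    induction k with
    | zero => simpa using h₀
    | succ k ih => rw [pow_succ]; linarith [hQ k]
  have hbound : ∀ k, Q k ^ 2 * exp (-Q k) ≤ 3 / 32 * (1 / 16) ^ k := by
    intro k
    have hpos : 0 < 16 * (4 : ℝ) ^ k := by positivity
    calc Q k ^ 2 * exp (-Q k) ≤ 24 / Q k ^ 2 := sq_mul_exp_neg_le (hpos.trans_le (hgeom k))
      _ ≤ 24 / (16 * 4 ^ k) ^ 2 := by gcongr; exact hgeom k
      _ = 3 / 32 * (1 / 16) ^ k := by
        rw [mul_pow, ← pow_mul, one_div_pow, mul_comm k, pow_mul]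
        field_simp; ring
  have hgeom_summable : Summable fun k : ℕ => 3 / 32 * (1 / 16 : ℝ) ^ k :=
    (summable_geometric_of_lt_one (by norm_num) (by norm_num)).mul_left _
  have hsummable : Summable fun k => Q k ^ 2 * exp (-Q k) :=
    hgeom_summable.of_nonneg_of_le (fun k => by positivity) hbound
  refine ⟨hsummable, ?_⟩
  calc ∑' k, Q k ^ 2 * exp (-Q k) ≤ ∑' k : ℕ, 3 / 32 * (1 / 16 : ℝ) ^ k :=
        hsummable.tsum_le_tsum hbound hgeom_summable
    _ = 1 / 10 := by
        rw [tsum_mul_left, tsum_geometric_of_lt_one (by norm_num) (by norm_num)]; norm_num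


theorem hY_update_zero (α α' : ℝ) (θ : Fin 3 → ℝ) (y : ℝ) :
    hY α α' (update θ 0 y) = hY α α' θ
      - cosSeries (fun k => cfq α (k + 1)) (fun k => cfp α (k + 1)) y (θ 2)
      + cosSeries (fun k => cfq α (k + 1)) (fun k => cfp α (k + 1)) (θ 0) (θ 2) := by
  simp only [hY, cosSeries, ne_eq, Fin.reduceEq, not_false_eq_true, update_of_ne, update_self]
  ring

theorem hY_update_one (α α' : ℝ) (θ : Fin 3 → ℝ) (y : ℝ) :
    hY α α' (update θ 1 y) = hY α α' θ
      - cosSeries (fun k => cfq α' (k + 1)) (fun k => cfp α' (k + 1)) y (θ 2)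
      + cosSeries (fun k => cfq α' (k + 1)) (fun k => cfp α' (k + 1)) (θ 1) (θ 2) := by
  simp only [hY, cosSeries, ne_eq, Fin.reduceEq, not_false_eq_true, update_of_ne, update_self]
  ring

namespace MemY

variable {α α' : ℝ}

theorem four_mul_cfq_le (h : MemY α α') {n : ℕ} (hn : 1 ≤ n) :
    4 * cfq α n ≤ cfq α' n ∧ 4 * cfq α' n ≤ cfq α (n + 1) := by
  have hle_exp : ∀ x : ℝ, x ≤ exp x := fun x => by linarith [Real.add_one_le_exp x]
  obtain ⟨h₁, h₂⟩ := h.2.2 n hn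
  exact ⟨by linarith [hle_exp (cfq α n)], by linarith [hle_exp (cfq α' n)]⟩

theorem fastConvergents_fst (h : MemY α α') :
    FastConvergents (fun k => cfq α (k + 1)) (fun k => cfp α (k + 1)) α := by
  have htail := summable_sq_mul_exp_neg_and_tsum_le (Q := fun k => cfq α (k + 2))
    (by linarith [h.four_mul_cfq_le le_rfl, one_le_cfq h.1 1])
    fun k => by linarith [h.four_mul_cfq_le (n := k + 2) (by omega), cfq_pos h.1 (k + 2)]
  exact ⟨fun k => one_le_cfq h.1 _, monotone_cfq.comp fun _ _ _ => by omega,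
    fun k => abs_cfq_mul_sub_cfp_le h.1 _, fun k => one_div_cfq_add_cfq_le_abs h.1 _,
    htail.1, htail.2⟩

theorem fastConvergents_snd (h : MemY α α') :
    FastConvergents (fun k => cfq α' (k + 1)) (fun k => cfp α' (k + 1)) α' := by
  have htail := summable_sq_mul_exp_neg_and_tsum_le (Q := fun k => cfq α' (k + 2))
    (by linarith [h.four_mul_cfq_le le_rfl, h.four_mul_cfq_le (n := 2) (by omega),
      one_le_cfq h.1 1])
    fun k => by
      linarith [h.four_mul_cfq_le (n := k + 2) (by omega),
        h.four_mul_cfq_le (n := k + 3) (by omega), cfq_pos h.2.1 (k + 2)]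
  exact ⟨fun k => one_le_cfq h.2.1 _, monotone_cfq.comp fun _ _ _ => by omega,
    fun k => abs_cfq_mul_sub_cfp_le h.2.1 _, fun k => one_div_cfq_add_cfq_le_abs h.2.1 _,
    htail.1, htail.2⟩

end MemY

theorem stretching_Yoccoz (α α' : ℝ) (hY' : MemY α α')
    (H : PS3 → ℝ)
    (hH : H = fun x : PS3 =>
      (∑ j, x.2 j * (![α, α', 1] : Fin 3 → ℝ) j) + hY α α' x.1)
    (Φ : ℝ → PS3 → PS3) (hΦ : IsHamFlow H Φ) :
    ∀ n : ℕ, 1 ≤ n →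
      (∀ t ∈ Icc (Real.exp (cfq α n)) (cfq α (n + 1) / 4),
        Stretching1 H Φ t (1 / cfq α n) (cfq α n)) ∧
      (∀ t ∈ Icc (Real.exp (cfq α' n)) (cfq α' (n + 1) / 4),
        Stretching2 H Φ t (1 / cfq α' n) (cfq α' n)) := by
  have hHr : IsAffineInActions H ![α, α', 1] := fun θ r j y => by
    simp only [hH, sum_update_mul]; ring
  intro n hn
  obtain ⟨m, rfl⟩ : ∃ m, n = m + 1 := ⟨n - 1, by omega⟩
  refine ⟨fun t ht => hΦ.stretching1 hHr rfl hY'.fastConvergents_fst (fun θ r y => ?_) ht,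
    fun t ht => hΦ.stretching2 hHr rfl hY'.fastConvergents_snd (fun θ r y => ?_) ht⟩
  · simp only [hH, hY_update_zero]; ring
  · simp only [hH, hY_update_one]; ring
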